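/- For every integer n ≥ 3, the graph Kₙ × K₂ is type I, i.e., χ''(Kₙ × K₂) = n, where Δ(Kₙ × K₂) = n − 1. -/

import Mathlib

open SimpleGraph

variable {V : Type*} {W : Type*}

/-- The direct (tensor) product of two simple graphs. -/
def tensorProd (G : SimpleGraph V) (H : SimpleGraph W) : SimpleGraph (V × W) where
  Adj a b := G.Adj a.1 b.1 ∧ H.Adj a.2 b.2
  symm := ⟨fun _ _ h => ⟨G.adj_symm h.1, H.adj_symm h.2⟩⟩
  loopless := ⟨fun a h => G.irrefl h.1⟩

instance tensorProd.adjDecidable (G : SimpleGraph V) (H : SimpleGraph W)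
    [DecidableRel G.Adj] [DecidableRel H.Adj] : DecidableRel (tensorProd G H).Adj :=
  fun a b => inferInstanceAs (Decidable (G.Adj a.1 b.1 ∧ H.Adj a.2 b.2))

/-- A proper edge colouring with `n` colours, given as a symmetric function on adjacent pairs. -/
def IsEdgeColoring (G : SimpleGraph V) (n : ℕ) (ce : V → V → Fin n) : Prop :=
  (∀ u v, G.Adj u v → ce u v = ce v u) ∧
  (∀ u v w, G.Adj u v → G.Adj u w → v ≠ w → ce u v ≠ ce u w)

/-- A proper total colouring with `n` colours. -/
def IsTotalColoring (G : SimpleGraph V) (n : ℕ) (cv : V → Fin n) (ce : V → V → Fin n) : Prop :=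
  (∀ u v, G.Adj u v → ce u v = ce v u) ∧
  (∀ u v, G.Adj u v → cv u ≠ cv v) ∧
  (∀ u v w, G.Adj u v → G.Adj u w → v ≠ w → ce u v ≠ ce u w) ∧
  (∀ u v, G.Adj u v → ce u v ≠ cv u ∧ ce u v ≠ cv v)

/-- The total chromatic number of a graph. -/
noncomputable def totalChromaticNumber (G : SimpleGraph V) : ℕ :=
  sInf {n | ∃ cv ce, IsTotalColoring G n cv ce}

/-- Adjacency of the crown graph. -/
def crownAdj {m : ℕ} : Fin m ⊕ Fin m → Fin m ⊕ Fin m → Prop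
  | Sum.inl k, Sum.inr t => k ≠ t
  | Sum.inr k, Sum.inl t => k ≠ t
  | _, _ => False

/-- The crown graph `J_{2m}`: `K_{m,m}` minus a perfect matching. -/
def crown (m : ℕ) : SimpleGraph (Fin m ⊕ Fin m) where
  Adj := crownAdj
  symm := ⟨by rintro (k|k) (t|t) h <;> simp only [crownAdj] at * <;> exact fun e => h e.symm⟩
  loopless := ⟨by rintro (k|k) h <;> simp only [crownAdj] at h⟩

instance crown.adjDecidable (m : ℕ) : DecidableRel (crown m).Adj := fun a b =>
  match a, b with
  | Sum.inl k, Sum.inr t => (inferInstance : Decidable (k ≠ t))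
  | Sum.inr k, Sum.inl t => (inferInstance : Decidable (k ≠ t))
  | Sum.inl _, Sum.inl _ => isFalse (fun h => h)
  | Sum.inr _, Sum.inr _ => isFalse (fun h => h)

/-!
Colour vertex `(a, i)` of `Kₙ × K₂` with `a`. The edges at `(a, 0)` go to the `(b, 1)` with
`b ≠ a`, so completing this to a total colouring with `n` colours amounts to filling an `n × n`
array with empty diagonal, without repeats in rows or columns, so that cell `(a, b)` avoids both
`a` and `b`. For odd `n` the midpoints `(a + b) / 2` in `ℤ/n` do it. For even `n`, start from the
midpoint array for `n - 1` and move its transversal `(a, a + 1)` into a new row and column, writing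
the new symbol into the emptied cells. Conversely, a vertex and its `n - 1` incident edges need `n`
distinct colours.
-/

open Function Finset

structure IsAvoidingLatinSquare {α : Type*} (f : α → α → α) : Prop where
  ne_left : ∀ ⦃a b⦄, a ≠ b → f a b ≠ a
  ne_right : ∀ ⦃a b⦄, a ≠ b → f a b ≠ b
  row_inj : ∀ ⦃a b b'⦄, a ≠ b → a ≠ b' → f a b = f a b' → b = b'
  col_inj : ∀ ⦃a a' b⦄, a ≠ b → a' ≠ b → f a b = f a' b → a = a'

namespace IsAvoidingLatinSquare

variable {α β : Type*} {f : α → α → α}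

theorem equiv (hf : IsAvoidingLatinSquare f) (e : α ≃ β) :
    IsAvoidingLatinSquare fun x y => e (f (e.symm x) (e.symm y)) where
  ne_left a b h := by
    rw [Ne, ← e.eq_symm_apply]; exact hf.ne_left (e.symm.injective.ne h)
  ne_right a b h := by
    rw [Ne, ← e.eq_symm_apply]; exact hf.ne_right (e.symm.injective.ne h)
  row_inj a b b' h h' hbb' := e.symm.injective <|
    hf.row_inj (e.symm.injective.ne h) (e.symm.injective.ne h') (e.injective hbb')
  col_inj a a' b h h' haa' := e.symm.injective <|
    hf.col_inj (e.symm.injective.ne h) (e.symm.injective.ne h') (e.injective haa')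

end IsAvoidingLatinSquare

theorem isAvoidingLatinSquare_midpoint (R : Type*) {V P : Type*} [Ring R] [Invertible (2 : R)]
    [AddCommGroup V] [Module R V] [AddTorsor V P] :
    IsAvoidingLatinSquare (midpoint R : P → P → P) where
  ne_left _ _ h h' := h ((midpoint_eq_left_iff R).1 h')
  ne_right _ _ h h' := h ((midpoint_eq_right_iff R).1 h')
  row_inj _ _ _ _ _ h := (midpoint_eq_iff.1 h).symm.trans (midpoint_eq_iff.1 rfl)
  col_inj a a' b _ _ h := by
    rw [midpoint_comm a, midpoint_comm a'] at h
    exact (midpoint_eq_iff.1 h).symm.trans (midpoint_eq_iff.1 rfl)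

/-- The one-point extension of `f` along `σ`: the cells `(a, σ a)` are emptied, their entries
moved to the new row and column `none`, and the new symbol `none` written into them. -/
def prolong {α : Type*} [DecidableEq α] (f : α → α → α) (σ : α ≃ α) :
    Option α → Option α → Option α
  | some a, some b => if b = σ a then none else some (f a b)
  | some a, none => some (f a (σ a))
  | none, some b => some (f (σ.symm b) b)
  | none, none => none

namespace IsAvoidingLatinSquare

variable {α : Type*} [DecidableEq α] {f : α → α → α}

theorem prolong (hf : IsAvoidingLatinSquare f) {σ : α ≃ α} (hσ : ∀ a, σ a ≠ a)
    (htr : Injective fun a => f a (σ a)) : IsAvoidingLatinSquare (prolong f σ) where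
  ne_left := by
    rintro (_ | a) (_ | b) h <;> simp only [_root_.prolong]
    · exact absurd rfl h
    · simp
    · simpa using hf.ne_left (hσ a).symm
    · split_ifs
      · simp
      · simpa using hf.ne_left (h <| congrArg some ·)
  ne_right := by
    rintro (_ | a) (_ | b) h <;> simp only [_root_.prolong]
    · exact absurd rfl h
    · simpa using hf.ne_right (by simpa using (hσ (σ.symm b)).symm)
    · simp
    · split_ifs
      · simp
      · simpa using hf.ne_right (h <| congrArg some ·)
  row_inj := by
    rintro (_ | a) (_ | b) (_ | b') h h' hbb' <;>
      simp only [_root_.prolong, ne_eq, Option.some.injEq, not_true_eq_false] at h h' hbb' ⊢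
    · simpa using htr (a₁ := σ.symm b) (a₂ := σ.symm b') (by simpa using hbb')
    · split_ifs at hbb' with hb'
      exact absurd (hf.row_inj (hσ a).symm h' (Option.some.inj hbb')).symm hb'
    · split_ifs at hbb' with hb
      exact absurd (hf.row_inj h (hσ a).symm (Option.some.inj hbb')) hb
    · split_ifs at hbb' with hb hb'
      · rw [hb, hb']
      · exact hf.row_inj h h' (Option.some.inj hbb')
  col_inj := by
    have hσ' b : σ.symm b ≠ b := fun h => hσ (σ.symm b) (by rw [σ.apply_symm_apply, h])
    rintro (_ | a) (_ | a') (_ | b) h h' haa' <;>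
      simp only [_root_.prolong, ne_eq, Option.some.injEq, not_true_eq_false] at h h' haa' ⊢
    · split_ifs at haa' with hb
      exact absurd (σ.symm_apply_eq.1 (hf.col_inj (hσ' b) h' (Option.some.inj haa'))) hb
    · split_ifs at haa' with hb
      exact absurd (σ.symm_apply_eq.1 (hf.col_inj (hσ' b) h (Option.some.inj haa').symm)) hb
    · exact htr haa'
    · split_ifs at haa' with hb hb'
      · exact σ.injective (hb.symm.trans hb')
      · exact hf.col_inj h h' (Option.some.inj haa')

end IsAvoidingLatinSquare

theorem isAvoidingLatinSquare_prolong_midpoint (R : Type*) {V : Type*} [Ring R]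
    [Invertible (2 : R)] [AddCommGroup V] [Module R V] [DecidableEq V] {v : V} (hv : v ≠ 0) :
    IsAvoidingLatinSquare (prolong (midpoint R) (Equiv.addRight v)) := by
  have midpoint_add_right (x : V) : midpoint R x (x + v) = x + (⅟2 : R) • v := by
    rw [eq_add_of_sub_eq' (midpoint_sub_left x (x + v)), add_sub_cancel_left]
  refine (isAvoidingLatinSquare_midpoint R).prolong (fun a => by simpa using hv) fun a a' h => ?_
  simpa [midpoint_add_right] using h

theorem exists_isAvoidingLatinSquare_fin {n : ℕ} (hn : 3 ≤ n) :
    ∃ f : Fin n → Fin n → Fin n, IsAvoidingLatinSquare f := by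
  obtain ⟨m, hm, hm1, hnm⟩ : ∃ m, Odd m ∧ 1 < m ∧ (m = n ∨ m + 1 = n) := by
    rcases n.even_or_odd with ⟨k, hk⟩ | hn'
    · exact ⟨n - 1, ⟨k - 1, by omega⟩, by omega, .inr (by omega)⟩
    · exact ⟨n, hn', by omega, .inl rfl⟩
  have : Fact (1 < m) := ⟨hm1⟩
  have : NeZero m := ⟨by omega⟩
  have : Invertible (2 : ZMod m) :=
    (ZMod.unitOfCoprime 2 (Nat.coprime_two_left.2 hm)).invertible
  rcases hnm with rfl | rfl
  · exact ⟨_, (isAvoidingLatinSquare_midpoint (ZMod m)).equiv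
      (Fintype.equivFinOfCardEq (ZMod.card _))⟩
  · exact ⟨_, (isAvoidingLatinSquare_prolong_midpoint (ZMod m) one_ne_zero).equiv
      (Fintype.equivFinOfCardEq (α := Option (ZMod m)) (by simp))⟩

section TotalColoring

variable {G : SimpleGraph V} {k : ℕ} {cv : V → Fin k} {ce : V → V → Fin k}

theorem IsTotalColoring.degree_lt (h : IsTotalColoring G k cv ce) (v : V)
    [Fintype (G.neighborSet v)] : G.degree v < k := by
  have hinj : Set.InjOn (ce v) (G.neighborFinset v) := fun u hu w hw huw => by
    by_contra hne
    exact h.2.2.1 v u w (by simpa using hu) (by simpa using hw) hne huw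
  have hfresh : cv v ∉ (G.neighborFinset v).image (ce v) := by
    simp only [mem_image, mem_neighborFinset, not_exists, not_and]
    exact fun u hu => (h.2.2.2 v u hu).1
  calc G.degree v < (insert (cv v) ((G.neighborFinset v).image (ce v))).card := by
        rw [card_insert_of_notMem hfresh, card_image_of_injOn hinj, card_neighborFinset_eq_degree]
        exact Nat.lt_succ_self _
    _ ≤ k := (card_le_univ _).trans_eq (Fintype.card_fin k)

theorem IsTotalColoring.maxDegree_lt [Fintype V] [Nonempty V] [DecidableRel G.Adj]
    (h : IsTotalColoring G k cv ce) : G.maxDegree < k := by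
  obtain ⟨v, hv⟩ := G.exists_maximal_degree_vertex
  exact hv ▸ h.degree_lt v

theorem IsTotalColoring.totalChromaticNumber_eq [Fintype V] [Nonempty V] [DecidableRel G.Adj]
    (h : IsTotalColoring G k cv ce) (hk : k = G.maxDegree + 1) : totalChromaticNumber G = k :=
  le_antisymm (Nat.sInf_le ⟨cv, ce, h⟩) <|
    le_csInf ⟨k, cv, ce, h⟩ fun _ ⟨_, _, h'⟩ => hk ▸ h'.maxDegree_lt

end TotalColoring

theorem tensorProd_top_adj {u v : V × W} :
    (tensorProd (⊤ : SimpleGraph V) (⊤ : SimpleGraph W)).Adj u v ↔ u.1 ≠ v.1 ∧ u.2 ≠ v.2 :=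
  Iff.rfl

theorem tensorProd_top_isRegularOfDegree [Fintype V] [Fintype W] [DecidableEq V]
    [DecidableEq W] :
    (tensorProd (⊤ : SimpleGraph V) (⊤ : SimpleGraph W)).IsRegularOfDegree
      ((Fintype.card V - 1) * (Fintype.card W - 1)) := fun v => by
  have : (tensorProd ⊤ ⊤).neighborFinset v = ({v.1}ᶜ : Finset V) ×ˢ ({v.2}ᶜ : Finset W) := by
    ext w
    simp [tensorProd_top_adj, eq_comm]
  rw [← card_neighborFinset_eq_degree, this, card_product, card_compl, card_compl,
    card_singleton, card_singleton]

theorem IsAvoidingLatinSquare.isTotalColoring {n : ℕ} {f : Fin n → Fin n → Fin n}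
    (hf : IsAvoidingLatinSquare f) :
    IsTotalColoring (tensorProd ⊤ (⊤ : SimpleGraph (Fin 2))) n Prod.fst
      fun u v => if u.2 = 0 then f u.1 v.1 else f v.1 u.1 := by
  have other : ∀ i j : Fin 2, i ≠ j → (j = 0 ↔ i ≠ 0) := by decide
  have same : ∀ i j k : Fin 2, i ≠ j → i ≠ k → j = k := by decide
  refine ⟨?symm, fun u v huv => huv.1, ?edge, ?incid⟩
  · rintro ⟨a, i⟩ ⟨b, j⟩ ⟨-, hij⟩
    simp only [other i j hij]
    split_ifs <;> first | rfl | contradiction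
  · rintro ⟨a, i⟩ ⟨b, j⟩ ⟨c, k⟩ ⟨hab, hij⟩ ⟨hac, hik⟩ hne
    obtain rfl := same i j k hij hik
    have hbc : b ≠ c := fun h => hne (by rw [h])
    dsimp only
    split_ifs
    · exact fun h => hbc (hf.row_inj hab hac h)
    · exact fun h => hbc (hf.col_inj hab.symm hac.symm h)
  · rintro ⟨a, i⟩ ⟨b, j⟩ ⟨hab, -⟩
    dsimp only
    split_ifs
    · exact ⟨hf.ne_left hab, hf.ne_right hab⟩
    · exact ⟨hf.ne_right hab.symm, hf.ne_left hab.symm⟩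

theorem Kn_tensor_K2_typeI (n : ℕ) (hn : 3 ≤ n) :
    totalChromaticNumber (tensorProd (⊤ : SimpleGraph (Fin n)) (⊤ : SimpleGraph (Fin 2))) = n ∧
    (tensorProd (⊤ : SimpleGraph (Fin n)) (⊤ : SimpleGraph (Fin 2))).maxDegree = n - 1 := by
  have : NeZero n := ⟨by omega⟩
  have hdeg := (tensorProd_top_isRegularOfDegree (V := Fin n) (W := Fin 2)).maxDegree_eq
  simp only [Fintype.card_fin, Nat.add_one_sub_one, mul_one] at hdeg
  obtain ⟨f, hf⟩ := exists_isAvoidingLatinSquare_fin hn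
  exact ⟨hf.isTotalColoring.totalChromaticNumber_eq (by omega), hdeg⟩
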